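/- arXiv:2207.11956 — 2 statements merged into one kernel-verified Lean document; each statement's English description precedes it below -/
import Mathlib

section
/- Let M = O_{λ,p}(M_2(k)) satisfy the hypotheses that λ² ≠ 1 and that the center Z of M equals k[x11^ℓ, x12^ℓ, x21^ℓ, x22^ℓ]. Then every graded automorphism φ of M that fixes the ideals (x12) and (x21) is diagonal: φ(x11)=a x11, φ(x12)=b x12, φ(x21)=c x21, φ(x22)=d x22 with ad = bc. -/
noncomputable section

/-- Generator `x i j` in the free algebra on four symbols. -/
def MGen (k : Type*) [Field k] (i j : Fin 2) : FreeAlgebra k (Fin 2 × Fin 2) :=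
  FreeAlgebra.ι k (i, j)

/-- The defining relations of the multiparameter quantum matrix algebra
`O_{λ,p}(M_2(k))`:
`x12 x11 = p12 x11 x12`, `x21 x11 = λ p21 x11 x21`, `x22 x12 = λ p21 x12 x22`,
`x22 x21 = p12 x21 x22`, `x21 x12 = λ p21² x12 x21`,
`x22 x11 = x11 x22 + (λ−1) p21 x12 x21`. -/
inductive MQM2Rel (k : Type*) [Field k] (lam p12 p21 : k) :
    FreeAlgebra k (Fin 2 × Fin 2) → FreeAlgebra k (Fin 2 × Fin 2) → Prop
  | r1 : MQM2Rel k lam p12 p21 (MGen k 0 1 * MGen k 0 0) (p12 • (MGen k 0 0 * MGen k 0 1))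
  | r2 : MQM2Rel k lam p12 p21 (MGen k 1 0 * MGen k 0 0)
      ((lam * p21) • (MGen k 0 0 * MGen k 1 0))
  | r3 : MQM2Rel k lam p12 p21 (MGen k 1 1 * MGen k 0 1)
      ((lam * p21) • (MGen k 0 1 * MGen k 1 1))
  | r4 : MQM2Rel k lam p12 p21 (MGen k 1 1 * MGen k 1 0) (p12 • (MGen k 1 0 * MGen k 1 1))
  | r5 : MQM2Rel k lam p12 p21 (MGen k 1 0 * MGen k 0 1)
      ((lam * p21 * p21) • (MGen k 0 1 * MGen k 1 0))
  | r6 : MQM2Rel k lam p12 p21 (MGen k 1 1 * MGen k 0 0)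
      (MGen k 0 0 * MGen k 1 1 + ((lam - 1) * p21) • (MGen k 0 1 * MGen k 1 0))

/-- The multiparameter quantum matrix algebra `O_{λ,p}(M_2(k))`. -/
abbrev MQM2 (k : Type*) [Field k] (lam p12 p21 : k) := RingQuot (MQM2Rel k lam p12 p21)

/-- The generators `x i j` of `O_{λ,p}(M_2(k))`. -/
def mx (k : Type*) [Field k] (lam p12 p21 : k) (i j : Fin 2) : MQM2 k lam p12 p21 :=
  RingQuot.mkAlgHom k (MQM2Rel k lam p12 p21) (MGen k i j)

namespace MQMaux

abbrev Gg := Fin 2 × Fin 2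

variable {k : Type*} [Field k]

/-! ### square-zero (degree-one) representations with arbitrary weights -/

abbrev V1 (k : Type*) [Field k] := k × (Gg → k)

def L1 (w : Gg → Gg → k) (p : Gg) : V1 k →ₗ[k] V1 k where
  toFun x := (0, x.1 • w p)
  map_add' x y := by refine Prod.ext (by simp) (by simp [add_smul])
  map_smul' t x := by refine Prod.ext (by simp) (by simp [smul_smul])

theorem L1_L1 (w : Gg → Gg → k) (p q : Gg) (x : V1 k) :
    L1 w p (L1 w q x) = 0 := by
  refine Prod.ext (by simp [L1]) (by simp [L1])

def rep1 (lam p12 p21 : k) (w : Gg → Gg → k) :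
    MQM2 k lam p12 p21 →ₐ[k] Module.End k (V1 k) := by
  refine RingQuot.liftAlgHom k ⟨FreeAlgebra.lift k (fun p => L1 w p), ?_⟩
  rintro x y (h | h | h | h | h | h) <;>
  · apply LinearMap.ext
    intro v
    simp only [MGen, map_mul, map_smul, map_add, FreeAlgebra.lift_ι_apply,
      Module.End.mul_apply, LinearMap.smul_apply, LinearMap.add_apply, L1_L1]
    simp

theorem rep1_mx (lam p12 p21 : k) (w : Gg → Gg → k) (i j : Fin 2) :
    rep1 lam p12 p21 w (mx k lam p12 p21 i j) (1, 0) = (0, w (i, j)) := by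
  rw [mx, rep1, RingQuot.liftAlgHom_mkAlgHom_apply]
  simp [MGen, L1]

theorem rep1_ideal_zero (lam p12 p21 : k) (w : Gg → Gg → k) (i j : Fin 2)
    (hw : w (i, j) = 0) {z : MQM2 k lam p12 p21}
    (hz : z ∈ TwoSidedIdeal.span ({mx k lam p12 p21 i j} : Set (MQM2 k lam p12 p21))) :
    rep1 lam p12 p21 w z = 0 := by
  have hgen : rep1 lam p12 p21 w (mx k lam p12 p21 i j) = 0 := by
    rw [mx, rep1, RingQuot.liftAlgHom_mkAlgHom_apply]
    apply LinearMap.ext; intro x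
    simp [MGen, L1, hw]
  have hmem := TwoSidedIdeal.mem_span_iff.mp hz
    (TwoSidedIdeal.ker (rep1 lam p12 p21 w)) ?_
  · exact (TwoSidedIdeal.mem_ker _).mp hmem
  · intro t ht
    rw [Set.mem_singleton_iff] at ht
    subst ht
    exact (TwoSidedIdeal.mem_ker _).mpr hgen

/-! ### the degree-two truncated representation -/

def Pe (a b : Gg) : Gg × Gg → k := Pi.single (a, b) 1

def Cc (lam p12 p21 : k) (r s : Gg) : Gg × Gg → k :=
  if (r,s) = ((0,1),(0,0)) then p12 • Pe (0,0) (0,1)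
  else if (r,s) = ((1,0),(0,0)) then (lam*p21) • Pe (0,0) (1,0)
  else if (r,s) = ((1,1),(0,1)) then (lam*p21) • Pe (0,1) (1,1)
  else if (r,s) = ((1,1),(1,0)) then p12 • Pe (1,0) (1,1)
  else if (r,s) = ((1,0),(0,1)) then (lam*p21*p21) • Pe (0,1) (1,0)
  else if (r,s) = ((1,1),(0,0)) then Pe (0,0) (1,1) + ((lam-1)*p21) • Pe (0,1) (1,0)
  else Pe r s

abbrev V2 (k : Type*) [Field k] := k × (Gg → k) × (Gg × Gg → k)

def LL (lam p12 p21 : k) (p : Gg) : V2 k →ₗ[k] V2 k where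
  toFun x := (0, x.1 • (Pi.single p 1 : Gg → k), ∑ s : Gg, x.2.1 s • Cc lam p12 p21 p s)
  map_add' x y := by
    refine Prod.ext (by simp) (Prod.ext ?_ ?_)
    · simp [add_smul]
    · simp [add_smul, Finset.sum_add_distrib]
  map_smul' t x := by
    refine Prod.ext (by simp) (Prod.ext ?_ ?_)
    · simp [smul_smul]
    · simp [smul_smul, Finset.smul_sum]

theorem LL_LL (lam p12 p21 : k) (p q : Gg) (x : V2 k) :
    LL lam p12 p21 p (LL lam p12 p21 q x) = (0, 0, x.1 • Cc lam p12 p21 p q) := by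
  refine Prod.ext (by simp [LL]) (Prod.ext (by simp [LL]) ?_)
  show (∑ s : Gg, (x.1 • (Pi.single q 1 : Gg → k)) s • Cc lam p12 p21 p s)
      = x.1 • Cc lam p12 p21 p q
  rw [Finset.sum_eq_single q]
  · simp
  · intro b _ hb; simp [Pi.single_apply, hb]
  · simp

def rep2 (lam p12 p21 : k) : MQM2 k lam p12 p21 →ₐ[k] Module.End k (V2 k) := by
  refine RingQuot.liftAlgHom k ⟨FreeAlgebra.lift k (fun p => LL lam p12 p21 p), ?_⟩
  rintro x y (h | h | h | h | h | h) <;>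
  · apply LinearMap.ext
    intro v
    simp only [MGen, map_mul, map_smul, map_add, FreeAlgebra.lift_ι_apply,
      Module.End.mul_apply, LinearMap.smul_apply, LinearMap.add_apply, LL_LL]
    refine Prod.ext (by simp) (Prod.ext (by simp) ?_)
    simp +decide [Cc, smul_smul, smul_add]
    try ring_nf
    try simp [mul_comm, mul_left_comm, smul_smul]

theorem rep2_mx_mx (lam p12 p21 : k) (i j i' j' : Fin 2) :
    rep2 lam p12 p21 (mx k lam p12 p21 i j * mx k lam p12 p21 i' j') (1,0,0)
      = (0, 0, Cc lam p12 p21 (i,j) (i',j')) := by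
  rw [map_mul, mx, mx, rep2, RingQuot.liftAlgHom_mkAlgHom_apply,
    RingQuot.liftAlgHom_mkAlgHom_apply]
  simp only [MGen, FreeAlgebra.lift_ι_apply, Module.End.mul_apply, LL_LL]
  simp

/-! ### the defining relations, in the quotient -/

variable (lam p12 p21 : k)

theorem mrel1 : mx k lam p12 p21 0 1 * mx k lam p12 p21 0 0
    = p12 • (mx k lam p12 p21 0 0 * mx k lam p12 p21 0 1) := by
  simpa only [mx, map_mul, map_smul] using
    RingQuot.mkAlgHom_rel k (MQM2Rel.r1 (k := k) (lam := lam) (p12 := p12) (p21 := p21))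

theorem mrel2 : mx k lam p12 p21 1 0 * mx k lam p12 p21 0 0
    = (lam * p21) • (mx k lam p12 p21 0 0 * mx k lam p12 p21 1 0) := by
  simpa only [mx, map_mul, map_smul] using
    RingQuot.mkAlgHom_rel k (MQM2Rel.r2 (k := k) (lam := lam) (p12 := p12) (p21 := p21))

theorem mrel3 : mx k lam p12 p21 1 1 * mx k lam p12 p21 0 1
    = (lam * p21) • (mx k lam p12 p21 0 1 * mx k lam p12 p21 1 1) := by
  simpa only [mx, map_mul, map_smul] using
    RingQuot.mkAlgHom_rel k (MQM2Rel.r3 (k := k) (lam := lam) (p12 := p12) (p21 := p21))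

theorem mrel4 : mx k lam p12 p21 1 1 * mx k lam p12 p21 1 0
    = p12 • (mx k lam p12 p21 1 0 * mx k lam p12 p21 1 1) := by
  simpa only [mx, map_mul, map_smul] using
    RingQuot.mkAlgHom_rel k (MQM2Rel.r4 (k := k) (lam := lam) (p12 := p12) (p21 := p21))

theorem mrel6 : mx k lam p12 p21 1 1 * mx k lam p12 p21 0 0
    = mx k lam p12 p21 0 0 * mx k lam p12 p21 1 1
      + ((lam - 1) * p21) • (mx k lam p12 p21 0 1 * mx k lam p12 p21 1 0) := by
  simpa only [mx, map_mul, map_smul, map_add] using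
    RingQuot.mkAlgHom_rel k (MQM2Rel.r6 (k := k) (lam := lam) (p12 := p12) (p21 := p21))

/-! ### coefficient extraction from the span -/

theorem exists_coeffs {v : MQM2 k lam p12 p21}
    (hv : v ∈ Submodule.span k
        ({mx k lam p12 p21 0 0, mx k lam p12 p21 0 1,
          mx k lam p12 p21 1 0, mx k lam p12 p21 1 1} : Set (MQM2 k lam p12 p21))) :
    ∃ a b c d : k, v = a • mx k lam p12 p21 0 0 + b • mx k lam p12 p21 0 1
      + c • mx k lam p12 p21 1 0 + d • mx k lam p12 p21 1 1 := by
  rw [Submodule.mem_span_insert] at hv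
  obtain ⟨a, z, hz, rfl⟩ := hv
  rw [Submodule.mem_span_insert] at hz
  obtain ⟨b, z2, hz2, rfl⟩ := hz
  rw [Submodule.mem_span_insert] at hz2
  obtain ⟨c, z3, hz3, rfl⟩ := hz2
  rw [Submodule.mem_span_singleton] at hz3
  obtain ⟨d, rfl⟩ := hz3
  exact ⟨a, b, c, d, by abel⟩

/-! ### nondegeneracy of the generators -/

theorem mx_ne_smul (i j i' j' : Fin 2) (h : (i, j) ≠ (i', j')) (t : k) :
    mx k lam p12 p21 i j ≠ t • mx k lam p12 p21 i' j' := by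
  intro hEq
  have h2 := congrArg
    (fun z => ((rep1 lam p12 p21 (fun p => Pi.single p 1) z) (1, 0)).2 (i, j)) hEq
  simp only [map_smul, LinearMap.smul_apply, rep1_mx] at h2
  rw [Prod.smul_snd] at h2
  simp [Pi.single_apply, h, Ne.symm h] at h2

theorem mx_ne_zero (i j : Fin 2) : mx k lam p12 p21 i j ≠ 0 := by
  intro hEq
  have h2 := congrArg
    (fun z => ((rep1 lam p12 p21 (fun p => Pi.single p 1) z) (1, 0)).2 (i, j)) hEq
  simp [rep1_mx] at h2

end MQMaux

set_option maxHeartbeats 1600000 in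
open MQMaux in
/-- if the center of `M = O_{λ,p}(M_2(k))` is `k[x11^ℓ,x12^ℓ,x21^ℓ,x22^ℓ]`,
then every graded automorphism `φ` of `M` fixing the two-sided ideals `(x12)` and
`(x21)` is diagonal: `φ(x_ij) = scalar · x_ij` with `ad = bc`. -/
theorem graded_automorphism_diagonal (k : Type*) [Field k] [IsAlgClosed k] [CharZero k]
    (lam p12 p21 : k) (hlam : lam ^ 2 ≠ 1) (hp : p12 * p21 = 1) (ℓ : ℕ) (hℓ : 0 < ℓ)
    (hZ : Subalgebra.center k (MQM2 k lam p12 p21) =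
      Algebra.adjoin k
        {mx k lam p12 p21 0 0 ^ ℓ, mx k lam p12 p21 0 1 ^ ℓ,
         mx k lam p12 p21 1 0 ^ ℓ, mx k lam p12 p21 1 1 ^ ℓ})
    (φ : MQM2 k lam p12 p21 ≃ₐ[k] MQM2 k lam p12 p21)
    -- φ is graded: it preserves the span of the degree-one generators
    (hgr : ∀ v ∈ Submodule.span k
        ({mx k lam p12 p21 0 0, mx k lam p12 p21 0 1,
          mx k lam p12 p21 1 0, mx k lam p12 p21 1 1} : Set (MQM2 k lam p12 p21)),
      φ v ∈ Submodule.span k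
        ({mx k lam p12 p21 0 0, mx k lam p12 p21 0 1,
          mx k lam p12 p21 1 0, mx k lam p12 p21 1 1} : Set (MQM2 k lam p12 p21)))
    -- φ fixes the two-sided ideals (x12) and (x21)
    (hI12 : ∀ z, z ∈ TwoSidedIdeal.span ({mx k lam p12 p21 0 1} : Set (MQM2 k lam p12 p21)) ↔
      φ z ∈ TwoSidedIdeal.span ({mx k lam p12 p21 0 1} : Set (MQM2 k lam p12 p21)))
    (hI21 : ∀ z, z ∈ TwoSidedIdeal.span ({mx k lam p12 p21 1 0} : Set (MQM2 k lam p12 p21)) ↔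
      φ z ∈ TwoSidedIdeal.span ({mx k lam p12 p21 1 0} : Set (MQM2 k lam p12 p21))) :
    ∃ a b c d : k,
      φ (mx k lam p12 p21 0 0) = a • mx k lam p12 p21 0 0 ∧
      φ (mx k lam p12 p21 0 1) = b • mx k lam p12 p21 0 1 ∧
      φ (mx k lam p12 p21 1 0) = c • mx k lam p12 p21 1 0 ∧
      φ (mx k lam p12 p21 1 1) = d • mx k lam p12 p21 1 1 ∧
      a * d = b * c := by
  classical
  have hlam1 : lam ≠ 1 := fun h => hlam (by rw [h]; ring)
  have hp21 : p21 ≠ 0 := fun h => by simp [h] at hp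
  have hp12 : p12 ≠ 0 := fun h => by simp [h] at hp
  -- Step A for x01
  obtain ⟨b1, b2, b3, b4, hφ01⟩ :=
    exists_coeffs lam p12 p21 (hgr (mx k lam p12 p21 0 1) (Submodule.subset_span (by simp)))
  have hid01 : φ (mx k lam p12 p21 0 1)
      ∈ TwoSidedIdeal.span ({mx k lam p12 p21 0 1} : Set (MQM2 k lam p12 p21)) :=
    (hI12 _).mp (TwoSidedIdeal.subset_span rfl)
  have h0 : rep1 lam p12 p21 (fun p => if p = (0,1) then 0 else Pi.single p 1)
      (φ (mx k lam p12 p21 0 1)) = 0 :=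
    rep1_ideal_zero lam p12 p21 _ 0 1 (by simp) hid01
  rw [hφ01] at h0
  have h0v := LinearMap.ext_iff.mp h0 (1, 0)
  simp only [map_add, map_smul, LinearMap.add_apply, LinearMap.smul_apply,
    LinearMap.zero_apply, rep1_mx] at h0v
  have eb1 := congrArg (fun y : V1 k => y.2 ((0 : Fin 2), (0 : Fin 2))) h0v
  have eb3 := congrArg (fun y : V1 k => y.2 ((1 : Fin 2), (0 : Fin 2))) h0v
  have eb4 := congrArg (fun y : V1 k => y.2 ((1 : Fin 2), (1 : Fin 2))) h0v
  simp +decide [Prod.smul_snd, Pi.single_apply] at eb1 eb3 eb4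
  subst eb1; subst eb3; subst eb4
  rw [zero_smul, zero_smul, zero_smul, zero_add, add_zero, add_zero] at hφ01
  have hb2 : b2 ≠ 0 := by
    intro h
    refine mx_ne_zero lam p12 p21 0 1 (φ.injective ?_)
    rw [hφ01, h, zero_smul, map_zero]
  -- Step A for x10
  obtain ⟨c1, c2, c3, c4, hφ10⟩ :=
    exists_coeffs lam p12 p21 (hgr (mx k lam p12 p21 1 0) (Submodule.subset_span (by simp)))
  have hid10 : φ (mx k lam p12 p21 1 0)
      ∈ TwoSidedIdeal.span ({mx k lam p12 p21 1 0} : Set (MQM2 k lam p12 p21)) :=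
    (hI21 _).mp (TwoSidedIdeal.subset_span rfl)
  have h1 : rep1 lam p12 p21 (fun p => if p = (1,0) then 0 else Pi.single p 1)
      (φ (mx k lam p12 p21 1 0)) = 0 :=
    rep1_ideal_zero lam p12 p21 _ 1 0 (by simp) hid10
  rw [hφ10] at h1
  have h1v := LinearMap.ext_iff.mp h1 (1, 0)
  simp only [map_add, map_smul, LinearMap.add_apply, LinearMap.smul_apply,
    LinearMap.zero_apply, rep1_mx] at h1v
  have ec1 := congrArg (fun y : V1 k => y.2 ((0 : Fin 2), (0 : Fin 2))) h1v
  have ec2 := congrArg (fun y : V1 k => y.2 ((0 : Fin 2), (1 : Fin 2))) h1v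
  have ec4 := congrArg (fun y : V1 k => y.2 ((1 : Fin 2), (1 : Fin 2))) h1v
  simp +decide [Prod.smul_snd, Pi.single_apply] at ec1 ec2 ec4
  subst ec1; subst ec2; subst ec4
  rw [zero_smul, zero_smul, zero_smul, zero_add, zero_add, add_zero] at hφ10
  have hc3 : c3 ≠ 0 := by
    intro h
    refine mx_ne_zero lam p12 p21 1 0 (φ.injective ?_)
    rw [hφ10, h, zero_smul, map_zero]
  -- Step B : coefficients of φ(x00), φ(x11)
  obtain ⟨a1, a2, a3, a4, hφ00⟩ :=
    exists_coeffs lam p12 p21 (hgr (mx k lam p12 p21 0 0) (Submodule.subset_span (by simp)))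
  obtain ⟨d1, d2, d3, d4, hφ11⟩ :=
    exists_coeffs lam p12 p21 (hgr (mx k lam p12 p21 1 1) (Submodule.subset_span (by simp)))
  -- transported relations
  have E1 := congrArg φ (mrel1 lam p12 p21)
  rw [map_mul, map_smul, map_mul, hφ01, hφ00] at E1
  have E2 := congrArg φ (mrel2 lam p12 p21)
  rw [map_mul, map_smul, map_mul, hφ10, hφ00] at E2
  have E3 := congrArg φ (mrel3 lam p12 p21)
  rw [map_mul, map_smul, map_mul, hφ01, hφ11] at E3
  have E4 := congrArg φ (mrel4 lam p12 p21)
  rw [map_mul, map_smul, map_mul, hφ10, hφ11] at E4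
  -- scalar consequences
  have qa2 := congrArg (fun z => ((rep2 lam p12 p21 z) (1,0,0)).2.2
    (((0:Fin 2),(1:Fin 2)),((0:Fin 2),(1:Fin 2)))) E1
  have qa4 := congrArg (fun z => ((rep2 lam p12 p21 z) (1,0,0)).2.2
    (((0:Fin 2),(1:Fin 2)),((1:Fin 2),(1:Fin 2)))) E1
  have qa3 := congrArg (fun z => ((rep2 lam p12 p21 z) (1,0,0)).2.2
    (((1:Fin 2),(0:Fin 2)),((1:Fin 2),(0:Fin 2)))) E2
  have qd1 := congrArg (fun z => ((rep2 lam p12 p21 z) (1,0,0)).2.2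
    (((0:Fin 2),(0:Fin 2)),((0:Fin 2),(1:Fin 2)))) E3
  have qd2 := congrArg (fun z => ((rep2 lam p12 p21 z) (1,0,0)).2.2
    (((0:Fin 2),(1:Fin 2)),((0:Fin 2),(1:Fin 2)))) E3
  have qd3 := congrArg (fun z => ((rep2 lam p12 p21 z) (1,0,0)).2.2
    (((1:Fin 2),(0:Fin 2)),((1:Fin 2),(0:Fin 2)))) E4
  simp only [mul_add, add_mul, mul_smul_comm, smul_mul_assoc, smul_smul, smul_add,
    map_add, map_smul, LinearMap.add_apply, LinearMap.smul_apply, rep2_mx_mx]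
    at qa2 qa4 qa3 qd1 qd2 qd3
  simp +decide [Cc, Pe, Pi.single_apply, Prod.smul_snd] at qa2 qa4 qa3 qd1 qd2 qd3
  -- simple consequences
  have fa2 : a2 * (p12 - 1) = 0 := by
    have h : b2 * (a2 * (p12 - 1)) = 0 := by linear_combination -qa2
    exact (mul_eq_zero.mp h).resolve_left hb2
  have fa3 : a3 * (lam * p21 - 1) = 0 := by
    have h : c3 * (a3 * (lam * p21 - 1)) = 0 := by linear_combination -qa3
    exact (mul_eq_zero.mp h).resolve_left hc3
  have fd2 : d2 * (lam * p21 - 1) = 0 := by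
    have h : b2 * (d2 * (lam * p21 - 1)) = 0 := by linear_combination -qd2
    exact (mul_eq_zero.mp h).resolve_left hb2
  have fd3 : d3 * (p12 - 1) = 0 := by
    have h : c3 * (d3 * (p12 - 1)) = 0 := by linear_combination -qd3
    exact (mul_eq_zero.mp h).resolve_left hc3
  have hlam1' : lam - 1 ≠ 0 := sub_ne_zero.mpr hlam1
  have fa4 : a4 = 0 := by
    have h : b2 * (a4 * (lam - 1)) = 0 := by linear_combination -qa4 - b2 * a4 * lam * hp
    have h2 := (mul_eq_zero.mp h).resolve_left hb2
    exact (mul_eq_zero.mp h2).resolve_right hlam1'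
  have fd1 : d1 = 0 := by
    have h : b2 * (d1 * (lam - 1)) = 0 := by linear_combination -qd1 - b2 * d1 * lam * hp
    have h2 := (mul_eq_zero.mp h).resolve_left hb2
    exact (mul_eq_zero.mp h2).resolve_right hlam1'
  subst fa4; subst fd1
  rw [zero_smul, add_zero] at hφ00
  rw [zero_smul, zero_add] at hφ11
  -- the sixth relation
  have E6 := congrArg φ (mrel6 lam p12 p21)
  rw [map_mul, map_add, map_mul, map_smul, map_mul, hφ00, hφ01, hφ10, hφ11] at E6
  have r1 := congrArg (fun z => ((rep2 lam p12 p21 z) (1,0,0)).2.2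
    (((0:Fin 2),(1:Fin 2)),((1:Fin 2),(1:Fin 2)))) E6
  have r2 := congrArg (fun z => ((rep2 lam p12 p21 z) (1,0,0)).2.2
    (((1:Fin 2),(0:Fin 2)),((1:Fin 2),(1:Fin 2)))) E6
  have r3 := congrArg (fun z => ((rep2 lam p12 p21 z) (1,0,0)).2.2
    (((0:Fin 2),(0:Fin 2)),((0:Fin 2),(1:Fin 2)))) E6
  have r4 := congrArg (fun z => ((rep2 lam p12 p21 z) (1,0,0)).2.2
    (((0:Fin 2),(0:Fin 2)),((1:Fin 2),(0:Fin 2)))) E6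
  have r5 := congrArg (fun z => ((rep2 lam p12 p21 z) (1,0,0)).2.2
    (((0:Fin 2),(1:Fin 2)),((1:Fin 2),(0:Fin 2)))) E6
  simp only [mul_add, add_mul, mul_smul_comm, smul_mul_assoc, smul_smul, smul_add,
    map_add, map_smul, LinearMap.add_apply, LinearMap.smul_apply, rep2_mx_mx]
    at r1 r2 r3 r4 r5
  simp +decide [Cc, Pe, Pi.single_apply, Prod.smul_snd] at r1 r2 r3 r4 r5
  -- kill the off-diagonal coefficients
  have ha2 : a2 = 0 := by
    by_contra ha2ne
    have hp121 : p12 = 1 := eq_of_sub_eq_zero ((mul_eq_zero.mp fa2).resolve_left ha2ne)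
    have hp211 : p21 = 1 := by rw [hp121, one_mul] at hp; exact hp
    have hl : lam * p21 - 1 ≠ 0 := by rw [hp211, mul_one]; exact hlam1'
    have hd2 : d2 = 0 := (mul_eq_zero.mp fd2).resolve_right hl
    have hd4 : d4 = 0 := by
      rw [hp211] at r1
      have h : a2 * (d4 * (lam - 1)) = 0 := by linear_combination r1
      exact (mul_eq_zero.mp ((mul_eq_zero.mp h).resolve_left ha2ne)).resolve_right hlam1'
    rw [hd2, hd4, zero_smul, zero_smul, zero_add, add_zero] at hφ11
    have hcon : φ (mx k lam p12 p21 1 1) = φ ((d3 * c3⁻¹) • mx k lam p12 p21 1 0) := by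
      rw [map_smul, hφ10, hφ11, smul_smul, mul_assoc, inv_mul_cancel₀ hc3, mul_one]
    exact mx_ne_smul lam p12 p21 1 1 1 0 (by decide) _ (φ.injective hcon)
  have ha3 : a3 = 0 := by
    by_contra ha3ne
    have hlp : lam * p21 = 1 := eq_of_sub_eq_zero ((mul_eq_zero.mp fa3).resolve_left ha3ne)
    have hp12ne1 : p12 - 1 ≠ 0 := by
      intro h
      have h12 : p12 = 1 := eq_of_sub_eq_zero h
      have h21 : p21 = 1 := by rw [h12, one_mul] at hp; exact hp
      rw [h21, mul_one] at hlp; exact hlam1 hlp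
    have hd3 : d3 = 0 := (mul_eq_zero.mp fd3).resolve_right hp12ne1
    have hd4 : d4 = 0 := by
      have h : a3 * (d4 * (p12 - 1)) = 0 := by linear_combination r2
      exact (mul_eq_zero.mp ((mul_eq_zero.mp h).resolve_left ha3ne)).resolve_right hp12ne1
    rw [hd3, hd4, zero_smul, zero_smul, add_zero, add_zero] at hφ11
    have hcon : φ (mx k lam p12 p21 1 1) = φ ((d2 * b2⁻¹) • mx k lam p12 p21 0 1) := by
      rw [map_smul, hφ01, hφ11, smul_smul, mul_assoc, inv_mul_cancel₀ hb2, mul_one]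
    exact mx_ne_smul lam p12 p21 1 1 0 1 (by decide) _ (φ.injective hcon)
  subst ha2; subst ha3
  rw [zero_smul, zero_smul, add_zero, add_zero] at hφ00
  have hd2 : d2 = 0 := by
    by_contra hd2ne
    have hlp : lam * p21 = 1 := eq_of_sub_eq_zero ((mul_eq_zero.mp fd2).resolve_left hd2ne)
    have hp12ne1 : p12 - 1 ≠ 0 := by
      intro h
      have h12 : p12 = 1 := eq_of_sub_eq_zero h
      have h21 : p21 = 1 := by rw [h12, one_mul] at hp; exact hp
      rw [h21, mul_one] at hlp; exact hlam1 hlp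
    have ha1 : a1 = 0 := by
      have h : d2 * (a1 * (p12 - 1)) = 0 := by linear_combination r3
      exact (mul_eq_zero.mp ((mul_eq_zero.mp h).resolve_left hd2ne)).resolve_right hp12ne1
    rw [ha1, zero_smul] at hφ00
    exact mx_ne_zero lam p12 p21 0 0 (φ.injective (hφ00.trans (map_zero φ.toAlgHom).symm))
  have hd3 : d3 = 0 := by
    by_contra hd3ne
    have h12 : p12 = 1 := eq_of_sub_eq_zero ((mul_eq_zero.mp fd3).resolve_left hd3ne)
    have h21 : p21 = 1 := by rw [h12, one_mul] at hp; exact hp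
    have hlp : lam * p21 - 1 ≠ 0 := by rw [h21, mul_one]; exact hlam1'
    have ha1 : a1 = 0 := by
      have h : d3 * (a1 * (lam * p21 - 1)) = 0 := by linear_combination r4
      exact (mul_eq_zero.mp ((mul_eq_zero.mp h).resolve_left hd3ne)).resolve_right hlp
    rw [ha1, zero_smul] at hφ00
    exact mx_ne_zero lam p12 p21 0 0 (φ.injective (hφ00.trans (map_zero φ.toAlgHom).symm))
  subst hd2; subst hd3
  rw [zero_smul, zero_smul, zero_add, zero_add] at hφ11
  have hfin : a1 * d4 = b2 * c3 := by
    have h : ((lam - 1) * p21) * (a1 * d4 - b2 * c3) = 0 := by linear_combination r5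
    have h2 := (mul_eq_zero.mp h).resolve_left (mul_ne_zero hlam1' hp21)
    exact sub_eq_zero.mp h2
  exact ⟨a1, b2, c3, d4, hφ00, hφ01, hφ10, hφ11, hfin⟩


end
end

section
/- Let m ≥ 3 be odd and q a primitive m-th root of unity, and write b = x12, c = x21 in O_q(M_2(k)). Then every algebra automorphism σ of O_q(M_2(k)) satisfies σ((b,c)) = (b,c), where (b,c) is the two-sided ideal generated by b and c. In particular (b,c) is a completely prime ideal with O_q(M_2(k))/(b,c) ≅ k[a,d] and (b,c)^m ∩ Z = (v, w, t_1, …, t_{m−1}) where v = b^m, w = c^m, t_r = b^r c^{m−r}. -/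
/-!
Let `a, b, c, d` be `x₁₁, x₁₂, x₂₁, x₂₂`. Killing `b` and `c` turns the defining relations into
`da = ad`, so `O_q(M_2(k)) / (b, c)` is the polynomial ring `k[a, d]`. For an automorphism `σ`,
the composite `O_q(M_2(k)) → k[a, d]` with `σ` is again surjective. In the commutative domain
`k[a, d]` the relations `uv = q vu` (`q ≠ 1`) force the images of `ab, ac, bd, cd` to vanish, and
the last relation (`q ≠ q⁻¹`) that of `bc`. So if `b` or `c` survived, all four generators would
map into `{0, p}` for one element `p`, and `k[a, d]` would be generated by `p`, which the chain
rule for partial derivatives rules out. Hence `σ(b), σ(c) ∈ (b, c)`.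

Since `b` and `c` commute, a product of `m` factors from `{b, c}` is some `bʳ cᵐ⁻ʳ`, so the two
generating sets of `(b, c)ᵐ` in the statement coincide.
-/

noncomputable section

def QM2Gen (k : Type*) [Field k] (i j : Fin 2) : FreeAlgebra k (Fin 2 × Fin 2) :=
  FreeAlgebra.ι k (i, j)

/-- The defining relations of `O_q(M_2(k))`:
`x12 x11 = q x11 x12`, `x21 x11 = q x11 x21`, `x22 x12 = q x12 x22`,
`x22 x21 = q x21 x22`, `x21 x12 = x12 x21`,
`x22 x11 = x11 x22 + (q - q⁻¹) x12 x21`. -/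
inductive QM2Rel (k : Type*) [Field k] (q : k) :
    FreeAlgebra k (Fin 2 × Fin 2) → FreeAlgebra k (Fin 2 × Fin 2) → Prop
  | r1 : QM2Rel k q (QM2Gen k 0 1 * QM2Gen k 0 0) (q • (QM2Gen k 0 0 * QM2Gen k 0 1))
  | r2 : QM2Rel k q (QM2Gen k 1 0 * QM2Gen k 0 0) (q • (QM2Gen k 0 0 * QM2Gen k 1 0))
  | r3 : QM2Rel k q (QM2Gen k 1 1 * QM2Gen k 0 1) (q • (QM2Gen k 0 1 * QM2Gen k 1 1))
  | r4 : QM2Rel k q (QM2Gen k 1 1 * QM2Gen k 1 0) (q • (QM2Gen k 1 0 * QM2Gen k 1 1))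
  | r5 : QM2Rel k q (QM2Gen k 1 0 * QM2Gen k 0 1) (QM2Gen k 0 1 * QM2Gen k 1 0)
  | r6 : QM2Rel k q (QM2Gen k 1 1 * QM2Gen k 0 0)
      (QM2Gen k 0 0 * QM2Gen k 1 1 + (q - q⁻¹) • (QM2Gen k 0 1 * QM2Gen k 1 0))

/-- The quantized coordinate ring `O_q(M_2(k))`. -/
abbrev QM2 (k : Type*) [Field k] (q : k) := RingQuot (QM2Rel k q)

/-- `qx k q i j` is `x_{i+1, j+1}`: indices start at `0`. -/
def qx (k : Type*) [Field k] (q : k) (i j : Fin 2) : QM2 k q :=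
  RingQuot.mkAlgHom k (QM2Rel k q) (QM2Gen k i j)

open MvPolynomial in
theorem MvPolynomial.adjoin_singleton_ne_top {R σ : Type*} [CommRing R] [Nontrivial R]
    [Nontrivial σ] (p : MvPolynomial σ R) : Algebra.adjoin R {p} ≠ ⊤ := by
  intro htop
  obtain ⟨i, j, hij⟩ := exists_pair_ne σ
  have hX : ∀ l, ∃ P : Polynomial R, Polynomial.aeval p P = X l := fun l => by
    rw [← AlgHom.mem_range, ← Algebra.adjoin_singleton_eq_range_aeval, htop]
    exact Algebra.mem_top
  obtain ⟨P, hP⟩ := hX i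
  obtain ⟨Q, hQ⟩ := hX j
  -- chain rule: `∂ₗ (P(p)) = P'(p) ∂ₗ p`
  have hPi := congrArg (pderiv i) hP
  have hPj := congrArg (pderiv j) hP
  have hQj := congrArg (pderiv j) hQ
  simp only [Derivation.map_aeval, smul_eq_mul, pderiv_X_self, pderiv_X_of_ne hij] at hPi hPj hQj
  -- `∂ⱼ p` is a unit by `hQj`, so `P'(p) = 0` by `hPj`, contradicting `hPi`
  have : (1 : MvPolynomial σ R) = 0 := by
    linear_combination (-1) * hPi
      + (pderiv i p * Polynomial.aeval p (Polynomial.derivative Q)) * hPj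
      - (Polynomial.aeval p (Polynomial.derivative P) * pderiv i p) * hQj
  exact one_ne_zero this

theorem eq_zero_of_eq_smul_self {k M : Type*} [Field k] [AddCommGroup M] [Module k M]
    {q : k} (hq : q ≠ 1) {x : M} (h : x = q • x) : x = 0 := by
  have : (1 - q) • x = 0 := by rw [sub_smul, one_smul, ← h, sub_self]
  exact (smul_eq_zero.mp this).resolve_left (sub_ne_zero.mpr hq.symm)

theorem IsPrimitiveRoot.sub_inv_ne_zero {k : Type*} [Field k] {q : k} {m : ℕ}
    (hq : IsPrimitiveRoot q m) (hm : 2 < m) : q - q⁻¹ ≠ 0 := by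
  intro h
  have hq0 : q ≠ 0 := hq.ne_zero (by omega)
  have hsq : q ^ 2 = 1 := by
    have := mul_inv_cancel₀ hq0
    rwa [← sub_eq_zero.mp h, ← sq] at this
  exact absurd (Nat.le_of_dvd two_pos (hq.dvd_of_pow_eq_one 2 hsq)) (by omega)

theorem Commute.exists_list_prod_eq_pow_mul_pow {A : Type*} [Monoid A] {b c : A}
    (hbc : Commute b c) {l : List A} (hl : ∀ x ∈ l, x = b ∨ x = c) :
    ∃ r ≤ l.length, l.prod = b ^ r * c ^ (l.length - r) := by
  induction l with
  | nil => exact ⟨0, le_rfl, by simp⟩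
  | cons y l ih =>
    obtain ⟨r, hr, hprod⟩ := ih fun x hx => hl x (List.mem_cons_of_mem y hx)
    rcases hl y List.mem_cons_self with rfl | rfl
    · refine ⟨r + 1, by simpa using hr, ?_⟩
      rw [List.prod_cons, hprod, List.length_cons, Nat.add_sub_add_right, ← mul_assoc, ← pow_succ']
    · refine ⟨r, hr.trans (Nat.le_succ _), ?_⟩
      rw [List.prod_cons, hprod, ← mul_assoc, (hbc.pow_left r).symm.eq, mul_assoc, ← pow_succ',
        List.length_cons, Nat.sub_add_comm hr]

theorem exists_ofFn_prod_eq_pow_mul_pow {A : Type*} [Monoid A] (b c : A) {m r : ℕ}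
    (hr : r ≤ m) :
    ∃ g : Fin m → A, (∀ i, g i = b ∨ g i = c) ∧ (List.ofFn g).prod = b ^ r * c ^ (m - r) := by
  induction m generalizing r with
  | zero => exact ⟨Fin.elim0, fun i => i.elim0, by simp [Nat.le_zero.mp hr]⟩
  | succ m ih =>
    cases r with
    | zero =>
      obtain ⟨g, hg, hprod⟩ := ih (Nat.zero_le m)
      refine ⟨Fin.cons c g, Fin.cases (Or.inr rfl) hg, ?_⟩
      rw [List.ofFn_succ, List.prod_cons]
      simp [hprod, pow_succ']
    | succ r =>
      obtain ⟨g, hg, hprod⟩ := ih (Nat.le_of_succ_le_succ hr)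
      refine ⟨Fin.cons b g, Fin.cases (Or.inl rfl) hg, ?_⟩
      rw [List.ofFn_succ, List.prod_cons]
      simp [hprod, pow_succ', mul_assoc]

theorem Commute.setOf_ofFn_prod_eq {A : Type*} [Monoid A] {b c : A} (hbc : Commute b c) (m : ℕ) :
    {x : A | ∃ g : Fin m → A, (∀ i, g i = b ∨ g i = c) ∧ x = (List.ofFn g).prod} =
      {x | ∃ r ≤ m, x = b ^ r * c ^ (m - r)} := by
  ext x
  constructor
  · rintro ⟨g, hg, rfl⟩
    simpa using hbc.exists_list_prod_eq_pow_mul_pow (l := List.ofFn g)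
      (by simpa [List.mem_ofFn] using hg)
  · rintro ⟨r, hr, rfl⟩
    obtain ⟨g, hg, hprod⟩ := exists_ofFn_prod_eq_pow_mul_pow b c hr
    exact ⟨g, hg, hprod.symm⟩

theorem setOf_pow_mul_pow_eq {A : Type*} [Monoid A] (b c : A) (m : ℕ) :
    {b ^ m, c ^ m} ∪ {x : A | ∃ r, 1 ≤ r ∧ r ≤ m - 1 ∧ x = b ^ r * c ^ (m - r)} =
      {x | ∃ r ≤ m, x = b ^ r * c ^ (m - r)} := by
  ext x
  constructor
  · rintro ((rfl | rfl) | ⟨r, -, hr, rfl⟩)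
    · exact ⟨m, le_rfl, by simp⟩
    · exact ⟨0, Nat.zero_le m, by simp⟩
    · exact ⟨r, by omega, rfl⟩
  · rintro ⟨r, hr, rfl⟩
    rcases Nat.eq_zero_or_pos r with rfl | hr0
    · exact Or.inl (Or.inr (by simp))
    rcases hr.eq_or_lt with rfl | hrm
    · exact Or.inl (Or.inl (by simp))
    exact Or.inr ⟨r, hr0, by omega, rfl⟩

namespace QM2

variable {k : Type*} [Field k] {q : k}

theorem ba_eq : qx k q 0 1 * qx k q 0 0 = q • (qx k q 0 0 * qx k q 0 1) := by
  simpa only [qx, map_mul, map_smul] using RingQuot.mkAlgHom_rel k (QM2Rel.r1 (q := q))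

theorem ca_eq : qx k q 1 0 * qx k q 0 0 = q • (qx k q 0 0 * qx k q 1 0) := by
  simpa only [qx, map_mul, map_smul] using RingQuot.mkAlgHom_rel k (QM2Rel.r2 (q := q))

theorem db_eq : qx k q 1 1 * qx k q 0 1 = q • (qx k q 0 1 * qx k q 1 1) := by
  simpa only [qx, map_mul, map_smul] using RingQuot.mkAlgHom_rel k (QM2Rel.r3 (q := q))

theorem dc_eq : qx k q 1 1 * qx k q 1 0 = q • (qx k q 1 0 * qx k q 1 1) := by
  simpa only [qx, map_mul, map_smul] using RingQuot.mkAlgHom_rel k (QM2Rel.r4 (q := q))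

theorem cb_eq : qx k q 1 0 * qx k q 0 1 = qx k q 0 1 * qx k q 1 0 := by
  simpa only [qx, map_mul] using RingQuot.mkAlgHom_rel k (QM2Rel.r5 (q := q))

theorem da_eq : qx k q 1 1 * qx k q 0 0 =
    qx k q 0 0 * qx k q 1 1 + (q - q⁻¹) • (qx k q 0 1 * qx k q 1 0) := by
  simpa only [qx, map_mul, map_add, map_smul] using RingQuot.mkAlgHom_rel k (QM2Rel.r6 (q := q))

variable (k q) in
theorem adjoin_range_qx :
    Algebra.adjoin k (Set.range fun ij : Fin 2 × Fin 2 => qx k q ij.1 ij.2) = ⊤ := by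
  rw [← (RingQuot.mkAlgHom k (QM2Rel k q)).range_eq_top.mpr (RingQuot.mkAlgHom_surjective k _),
    ← Algebra.map_top, ← FreeAlgebra.adjoin_range_ι, AlgHom.map_adjoin, ← Set.range_comp]
  rfl

theorem range_eq_adjoin {B : Type*} [Semiring B] [Algebra k B] (φ : QM2 k q →ₐ[k] B) :
    φ.range = Algebra.adjoin k (Set.range fun ij : Fin 2 × Fin 2 => φ (qx k q ij.1 ij.2)) := by
  rw [← Algebra.map_top, ← adjoin_range_qx, AlgHom.map_adjoin, ← Set.range_comp]
  rfl

theorem algHom_ext {B : Type*} [Semiring B] [Algebra k B] {φ ψ : QM2 k q →ₐ[k] B}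
    (h : ∀ i j, φ (qx k q i j) = ψ (qx k q i j)) : φ = ψ :=
  AlgHom.ext_of_adjoin_eq_top (adjoin_range_qx k q) (by rintro _ ⟨ij, rfl⟩; exact h ij.1 ij.2)

variable (k q) in
abbrev idealBC : TwoSidedIdeal (QM2 k q) := TwoSidedIdeal.span {qx k q 0 1, qx k q 1 0}

section CommTarget

variable {R : Type*} [CommRing R] [Algebra k R]

theorem map_mul_map_eq_zero_of_mul_eq_smul (hq : q ≠ 1) (φ : QM2 k q →ₐ[k] R)
    {u v : QM2 k q} (h : u * v = q • (v * u)) : φ u * φ v = 0 :=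
  eq_zero_of_eq_smul_self hq (by simpa only [map_mul, map_smul, mul_comm (φ v)] using congrArg φ h)

theorem map_b_mul_map_c_eq_zero (hq : q - q⁻¹ ≠ 0) (φ : QM2 k q →ₐ[k] R) :
    φ (qx k q 0 1) * φ (qx k q 1 0) = 0 := by
  have h := congrArg φ da_eq
  simpa only [map_mul, map_add, map_smul, mul_comm (φ (qx k q 1 1)), left_eq_add, smul_eq_zero,
    hq, false_or] using h

theorem map_b_eq_zero_and_map_c_eq_zero [IsDomain R] (hR : ∀ p : R, Algebra.adjoin k {p} ≠ ⊤)
    (hq1 : q ≠ 1) (hq2 : q - q⁻¹ ≠ 0) (φ : QM2 k q →ₐ[k] R) (hφ : Function.Surjective φ) :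
    φ (qx k q 0 1) = 0 ∧ φ (qx k q 1 0) = 0 := by
  have not_gen : ∀ p : R, ¬ ∀ i j, φ (qx k q i j) = 0 ∨ φ (qx k q i j) = p := by
    intro p hp
    refine hR p (top_le_iff.mp ?_)
    rw [← φ.range_eq_top.mpr hφ, range_eq_adjoin, Algebra.adjoin_le_iff]
    rintro _ ⟨⟨i, j⟩, rfl⟩
    rcases hp i j with h | h <;> simp only [SetLike.mem_coe, h]
    · exact zero_mem _
    · exact Algebra.self_mem_adjoin_singleton k p
  rcases mul_eq_zero.mp (map_b_mul_map_c_eq_zero hq2 φ) with hb | hc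
  · refine ⟨hb, by_contra fun hc => not_gen (φ (qx k q 1 0)) ?_⟩
    have ha := (mul_eq_zero.mp (map_mul_map_eq_zero_of_mul_eq_smul hq1 φ ca_eq)).resolve_left hc
    have hd := (mul_eq_zero.mp (map_mul_map_eq_zero_of_mul_eq_smul hq1 φ dc_eq)).resolve_right hc
    intro i j
    fin_cases i <;> fin_cases j <;> simp [ha, hb, hd]
  · refine ⟨by_contra fun hb => not_gen (φ (qx k q 0 1)) ?_, hc⟩
    have ha := (mul_eq_zero.mp (map_mul_map_eq_zero_of_mul_eq_smul hq1 φ ba_eq)).resolve_left hb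
    have hd := (mul_eq_zero.mp (map_mul_map_eq_zero_of_mul_eq_smul hq1 φ db_eq)).resolve_right hb
    intro i j
    fin_cases i <;> fin_cases j <;> simp [ha, hc, hd]

end CommTarget

open MvPolynomial

variable (k q) in
def diagHom : QM2 k q →ₐ[k] MvPolynomial (Fin 2) k :=
  RingQuot.liftAlgHom k ⟨FreeAlgebra.lift k fun ij => if ij.1 = ij.2 then X ij.1 else 0, by
    rintro _ _ ⟨⟩ <;> simp [QM2Gen, mul_comm]⟩

theorem diagHom_qx (i j : Fin 2) :
    diagHom k q (qx k q i j) = if i = j then X i else 0 := by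
  simp [diagHom, qx, QM2Gen]

theorem diagHom_surjective : Function.Surjective (diagHom k q) := by
  rw [← AlgHom.range_eq_top, eq_top_iff, ← adjoin_range_X, Algebra.adjoin_le_iff]
  rintro _ ⟨i, rfl⟩
  exact ⟨qx k q i i, by simp [diagHom_qx]⟩

open scoped IsMulCommutative in
theorem exists_comp_diagHom {B : Type*} [Ring B] [Algebra k B] (φ : QM2 k q →ₐ[k] B)
    (hb : φ (qx k q 0 1) = 0) (hc : φ (qx k q 1 0) = 0) :
    ∃ g : MvPolynomial (Fin 2) k →ₐ[k] B, g.comp (diagHom k q) = φ := by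
  have had : φ (qx k q 0 0) * φ (qx k q 1 1) = φ (qx k q 1 1) * φ (qx k q 0 0) := by
    simpa [hb] using (congrArg φ da_eq).symm
  let s : Set B := {φ (qx k q 0 0), φ (qx k q 1 1)}
  have hcomm : ∀ x ∈ s, ∀ y ∈ s, x * y = y * x := by
    rintro x (rfl | rfl) y (rfl | rfl) <;> first | rfl | exact had | exact had.symm
  have := Algebra.isMulCommutative_adjoin k hcomm
  refine ⟨(Algebra.adjoin k s).val.comp (aeval ![⟨_, Algebra.subset_adjoin (.inl rfl)⟩,
    ⟨_, Algebra.subset_adjoin (.inr rfl)⟩]), ?_⟩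
  refine algHom_ext fun i j => ?_
  fin_cases i <;> fin_cases j <;> simp [diagHom_qx, hb, hc]

theorem diagHom_eq_zero_iff (z : QM2 k q) : diagHom k q z = 0 ↔ z ∈ idealBC k q := by
  constructor
  · intro hz
    set I := idealBC k q
    have hI : ∀ w, I.ringCon.mkₐ k w = 0 ↔ w ∈ I := fun w => by
      conv_rhs => rw [← TwoSidedIdeal.ker_ringCon_mk' I, TwoSidedIdeal.mem_ker]
      rfl
    obtain ⟨g, hg⟩ := exists_comp_diagHom (I.ringCon.mkₐ k)
      ((hI _).mpr (TwoSidedIdeal.subset_span (.inl rfl)))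
      ((hI _).mpr (TwoSidedIdeal.subset_span (.inr rfl)))
    rw [← hI, ← hg, AlgHom.comp_apply, hz, map_zero]
  · refine fun hz => (TwoSidedIdeal.mem_ker _).mp (TwoSidedIdeal.span_le.mpr ?_ hz)
    rintro _ (rfl | rfl) <;> simp [TwoSidedIdeal.mem_ker, diagHom_qx]

theorem mem_idealBC_or_of_mul_mem {x y : QM2 k q} (h : x * y ∈ idealBC k q) :
    x ∈ idealBC k q ∨ y ∈ idealBC k q := by
  simpa only [← diagHom_eq_zero_iff, map_mul, mul_eq_zero] using h

theorem map_mem_idealBC (hq1 : q ≠ 1) (hq2 : q - q⁻¹ ≠ 0) (σ : QM2 k q ≃ₐ[k] QM2 k q)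
    {z : QM2 k q} (hz : z ∈ idealBC k q) : σ z ∈ idealBC k q := by
  obtain ⟨hb, hc⟩ := map_b_eq_zero_and_map_c_eq_zero adjoin_singleton_ne_top hq1 hq2
    ((diagHom k q).comp σ.toAlgHom) (diagHom_surjective.comp σ.surjective)
  refine (TwoSidedIdeal.mem_comap _).mp (TwoSidedIdeal.span_le.mpr ?_ hz)
  rintro _ (rfl | rfl)
  · exact (TwoSidedIdeal.mem_comap _).mpr ((diagHom_eq_zero_iff _).mp hb)
  · exact (TwoSidedIdeal.mem_comap _).mpr ((diagHom_eq_zero_iff _).mp hc)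

theorem map_mem_idealBC_iff (hq1 : q ≠ 1) (hq2 : q - q⁻¹ ≠ 0) (σ : QM2 k q ≃ₐ[k] QM2 k q)
    (z : QM2 k q) : σ z ∈ idealBC k q ↔ z ∈ idealBC k q :=
  ⟨fun h => by simpa using map_mem_idealBC hq1 hq2 σ.symm h, map_mem_idealBC hq1 hq2 σ⟩

end QM2

theorem automorphisms_fix_bc_general (k : Type*) [Field k]
    (q : k) (m : ℕ) (hm3 : 3 ≤ m) (hq : IsPrimitiveRoot q m) :
    (∀ σ : QM2 k q ≃ₐ[k] QM2 k q, ∀ z : QM2 k q,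
      z ∈ TwoSidedIdeal.span ({qx k q 0 1, qx k q 1 0} : Set (QM2 k q)) ↔
      σ z ∈ TwoSidedIdeal.span ({qx k q 0 1, qx k q 1 0} : Set (QM2 k q))) ∧
    -- `(b,c)` is completely prime
    (∀ x y : QM2 k q,
      x * y ∈ TwoSidedIdeal.span ({qx k q 0 1, qx k q 1 0} : Set (QM2 k q)) →
      x ∈ TwoSidedIdeal.span ({qx k q 0 1, qx k q 1 0} : Set (QM2 k q)) ∨
      y ∈ TwoSidedIdeal.span ({qx k q 0 1, qx k q 1 0} : Set (QM2 k q))) ∧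
    -- the quotient by `(b,c)` is the polynomial ring `k[a,d]`
    (∃ f : QM2 k q →ₐ[k] MvPolynomial (Fin 2) k,
      Function.Surjective f ∧
      f (qx k q 0 0) = MvPolynomial.X 0 ∧ f (qx k q 1 1) = MvPolynomial.X 1 ∧
      ∀ z : QM2 k q, f z = 0 ↔
        z ∈ TwoSidedIdeal.span ({qx k q 0 1, qx k q 1 0} : Set (QM2 k q))) ∧
    -- `(b,c)^m ∩ Z = (v, w, t_1, …, t_{m−1})`
    (∀ z ∈ Subalgebra.center k (QM2 k q),
      (z ∈ TwoSidedIdeal.span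
          {x : QM2 k q | ∃ g : Fin m → QM2 k q,
            (∀ i, g i = qx k q 0 1 ∨ g i = qx k q 1 0) ∧ x = (List.ofFn g).prod} ↔
       z ∈ TwoSidedIdeal.span
          ({qx k q 0 1 ^ m, qx k q 1 0 ^ m} ∪
            {x : QM2 k q | ∃ r, 1 ≤ r ∧ r ≤ m - 1 ∧
              x = qx k q 0 1 ^ r * qx k q 1 0 ^ (m - r)}))) := by
  have hq1 : q ≠ 1 := hq.ne_one (by omega)
  have hq2 : q - q⁻¹ ≠ 0 := hq.sub_inv_ne_zero (by omega)
  have hbc : Commute (qx k q 0 1) (qx k q 1 0) := QM2.cb_eq.symm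
  refine ⟨fun σ z => (QM2.map_mem_idealBC_iff hq1 hq2 σ z).symm,
    fun x y => QM2.mem_idealBC_or_of_mul_mem,
    ⟨QM2.diagHom k q, QM2.diagHom_surjective, by simp [QM2.diagHom_qx],
      by simp [QM2.diagHom_qx], QM2.diagHom_eq_zero_iff⟩,
    fun z _ => ?_⟩
  rw [hbc.setOf_ofFn_prod_eq, setOf_pow_mul_pow_eq]

/-- every automorphism of `O_q(M_2(k))` fixes the two-sided ideal
`(b,c)`; moreover `(b,c)` is completely prime with quotient the (commutative)
polynomial ring `k[a,d]`, and `(b,c)^m` (generated by the products of `m` factors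
from `{b,c}`) is generated by `v = b^m`, `w = c^m` and `t_r = b^r c^{m-r}`,
`1 ≤ r ≤ m−1`. -/
theorem automorphisms_fix_bc (k : Type*) [Field k] [IsAlgClosed k] [CharZero k]
    (q : k) (m : ℕ) (hm3 : 3 ≤ m) (hmodd : Odd m) (hq : IsPrimitiveRoot q m) :
    (∀ σ : QM2 k q ≃ₐ[k] QM2 k q, ∀ z : QM2 k q,
      z ∈ TwoSidedIdeal.span ({qx k q 0 1, qx k q 1 0} : Set (QM2 k q)) ↔
      σ z ∈ TwoSidedIdeal.span ({qx k q 0 1, qx k q 1 0} : Set (QM2 k q))) ∧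
    -- `(b,c)` is completely prime
    (∀ x y : QM2 k q,
      x * y ∈ TwoSidedIdeal.span ({qx k q 0 1, qx k q 1 0} : Set (QM2 k q)) →
      x ∈ TwoSidedIdeal.span ({qx k q 0 1, qx k q 1 0} : Set (QM2 k q)) ∨
      y ∈ TwoSidedIdeal.span ({qx k q 0 1, qx k q 1 0} : Set (QM2 k q))) ∧
    -- the quotient by `(b,c)` is the polynomial ring `k[a,d]`
    (∃ f : QM2 k q →ₐ[k] MvPolynomial (Fin 2) k,
      Function.Surjective f ∧
      f (qx k q 0 0) = MvPolynomial.X 0 ∧ f (qx k q 1 1) = MvPolynomial.X 1 ∧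
      ∀ z : QM2 k q, f z = 0 ↔
        z ∈ TwoSidedIdeal.span ({qx k q 0 1, qx k q 1 0} : Set (QM2 k q))) ∧
    -- `(b,c)^m ∩ Z = (v, w, t_1, …, t_{m−1})`
    (∀ z ∈ Subalgebra.center k (QM2 k q),
      (z ∈ TwoSidedIdeal.span
          {x : QM2 k q | ∃ g : Fin m → QM2 k q,
            (∀ i, g i = qx k q 0 1 ∨ g i = qx k q 1 0) ∧ x = (List.ofFn g).prod} ↔
       z ∈ TwoSidedIdeal.span
          ({qx k q 0 1 ^ m, qx k q 1 0 ^ m} ∪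
            {x : QM2 k q | ∃ r, 1 ≤ r ∧ r ≤ m - 1 ∧
              x = qx k q 0 1 ^ r * qx k q 1 0 ^ (m - r)}))) :=
  automorphisms_fix_bc_general k q m hm3 hq
end
end
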